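/- arXiv:2512.04654 — 2 statements merged into one kernel-verified Lean document; each statement's English description precedes it below -/
import Mathlib

section
/- Under the hypotheses of the truncated convergence lemma (nonnegative $h_m \in L^1(0,T)$ uniformly bounded in $L^1$, $h_m \to h$ a.e. with $h \in L^1(0,T)$, and weights $p(\alpha,\cdot)$ as above with $g(\alpha) \to \infty$ as $\alpha \to \hat\alpha^-$), one has the iterated limit $\lim_{\alpha\to\hat\alpha^-} \lim_m \int_0^T h_m(t)\, p(\alpha, h_m(t))\,dt = \int_0^T h(t)\,dt$. -/
open MeasureTheory Filter Set Asymptotics Topology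

/-! For fixed `α`, `φ r = r * p α r` is continuous, bounded by `r` and `o(r)` at infinity.
Replacing `φ r` by `φ (min r R)` for large `R` makes the integrals converge by dominated
convergence, and costs at most a small multiple of `∫ hm m ≤ M`, uniformly in `m`; hence
`∫ hm m * p α (hm m) → ∫ h * p α h`. As `α → αhat⁻`, `g α → ∞`, so `p α (h t) = 1` eventually
for every `t`, and dominated convergence by `h` gives `∫ h`. -/

theorem tendsto_of_forall_approx {ι E : Type*} [PseudoMetricSpace E] {l : Filter ι}
    {u : ι → E} {a : E}
    (H : ∀ ε > 0, ∃ v : ι → E, ∃ b, Tendsto v l (𝓝 b) ∧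
      (∀ i, dist (u i) (v i) ≤ ε) ∧ dist b a ≤ ε) :
    Tendsto u l (𝓝 a) := by
  refine Metric.tendsto_nhds.2 fun ε hε => ?_
  obtain ⟨v, b, hv, huv, hba⟩ := H (ε / 3) (by positivity)
  filter_upwards [Metric.tendsto_nhds.1 hv (ε / 3) (by positivity)] with i hi
  calc dist (u i) a ≤ dist (u i) (v i) + dist (v i) b + dist b a := dist_triangle4 _ _ _ _
    _ < ε := by linarith [huv i]

theorem abs_sub_comp_min_le {φ : ℝ → ℝ} {δ R r : ℝ} (hδ : 0 ≤ δ) (hr : 0 ≤ r)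
    (hφ : ∀ s, R ≤ s → |φ s| ≤ δ * s) :
    |φ r - φ (min r R)| ≤ 2 * δ * r := by
  rcases le_or_gt r R with hrR | hRr
  · rw [min_eq_left hrR, sub_self, abs_zero]
    positivity
  · rw [min_eq_right hRr.le]
    calc |φ r - φ R| ≤ |φ r| + |φ R| := abs_sub _ _
      _ ≤ δ * r + δ * R := add_le_add (hφ r hRr.le) (hφ R le_rfl)
      _ ≤ 2 * δ * r := by nlinarith

section

variable {α : Type*} [MeasurableSpace α] {μ : Measure α}

theorem ContinuousOn.comp_aestronglyMeasurable_of_nonneg {φ : ℝ → ℝ}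
    (hφ : ContinuousOn φ (Ici 0)) {f : α → ℝ} (hf : AEStronglyMeasurable f μ)
    (hf₀ : 0 ≤ᵐ[μ] f) : AEStronglyMeasurable (fun t => φ (f t)) μ := by
  have hφ' : Continuous fun r => φ (max r 0) :=
    hφ.comp_continuous (continuous_id.max continuous_const) fun r => le_max_right r 0
  refine (hφ'.comp_aestronglyMeasurable hf).congr ?_
  filter_upwards [hf₀] with t ht
  rw [max_eq_left (show (0:ℝ) ≤ f t from ht)]

theorem MeasureTheory.Integrable.comp_of_abs_le_self {φ : ℝ → ℝ} (hφ : ContinuousOn φ (Ici 0))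
    (hφ_le : ∀ r, 0 ≤ r → |φ r| ≤ r) {f : α → ℝ} (hf : Integrable f μ)
    (hf₀ : 0 ≤ᵐ[μ] f) : Integrable (fun t => φ (f t)) μ := by
  refine hf.mono (hφ.comp_aestronglyMeasurable_of_nonneg hf.1 hf₀) ?_
  filter_upwards [hf₀] with t ht
  simpa only [Real.norm_eq_abs, abs_of_nonneg ht] using hφ_le _ ht

theorem abs_integral_sub_comp_min_le {φ : ℝ → ℝ} (hφ : ContinuousOn φ (Ici 0))
    (hφ_le : ∀ r, 0 ≤ r → |φ r| ≤ r) {δ R : ℝ} (hδ : 0 ≤ δ) (hR : 0 ≤ R)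
    (hφ_small : ∀ s, R ≤ s → |φ s| ≤ δ * s) {f : α → ℝ} (hf : Integrable f μ)
    (hf₀ : 0 ≤ᵐ[μ] f) :
    |∫ t, φ (f t) ∂μ - ∫ t, φ (min (f t) R) ∂μ| ≤ 2 * δ * ∫ t, f t ∂μ := by
  have hφR : ContinuousOn (fun r => φ (min r R)) (Ici 0) :=
    hφ.comp (continuous_id.min continuous_const).continuousOn fun r hr => le_min hr hR
  have hφR_le : ∀ r, 0 ≤ r → |φ (min r R)| ≤ r := fun r hr =>
    (hφ_le _ (le_min hr hR)).trans (min_le_left r R)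
  rw [← integral_sub (hf.comp_of_abs_le_self hφ hφ_le hf₀)
    (hf.comp_of_abs_le_self hφR hφR_le hf₀), ← integral_const_mul]
  refine norm_integral_le_of_norm_le (f := fun t => φ (f t) - φ (min (f t) R))
    (hf.const_mul (2 * δ)) ?_
  filter_upwards [hf₀] with t ht
  exact abs_sub_comp_min_le hδ ht hφ_small

theorem tendsto_integral_comp_of_tendsto_self {ι : Type*} {l : Filter ι}
    [l.IsCountablyGenerated] {φ : ι → ℝ → ℝ} (hφ : ∀ᶠ i in l, ContinuousOn (φ i) (Ici 0))
    (hφ_le : ∀ᶠ i in l, ∀ r, 0 ≤ r → |φ i r| ≤ r)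
    (hφ_lim : ∀ r, 0 ≤ r → Tendsto (fun i => φ i r) l (𝓝 r)) {h : α → ℝ}
    (h_int : Integrable h μ) (h₀ : 0 ≤ᵐ[μ] h) :
    Tendsto (fun i => ∫ t, φ i (h t) ∂μ) l (𝓝 (∫ t, h t ∂μ)) := by
  refine tendsto_integral_filter_of_dominated_convergence h
    (hφ.mono fun i hi => hi.comp_aestronglyMeasurable_of_nonneg h_int.1 h₀)
    (hφ_le.mono fun i hi => ?_) h_int ?_
  · filter_upwards [h₀] with t ht
    exact hi _ ht
  · filter_upwards [h₀] with t ht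
    exact hφ_lim _ ht

variable [IsFiniteMeasure μ]

theorem tendsto_integral_comp_min {φ : ℝ → ℝ} (hφ : ContinuousOn φ (Ici 0))
    (hφ_le : ∀ r, 0 ≤ r → |φ r| ≤ r) {R : ℝ} (hR : 0 ≤ R) {f : ℕ → α → ℝ} {h : α → ℝ}
    (hf_meas : ∀ m, AEStronglyMeasurable (f m) μ) (hf₀ : ∀ m, 0 ≤ᵐ[μ] f m)
    (h_ae : ∀ᵐ t ∂μ, Tendsto (fun m => f m t) atTop (𝓝 (h t))) :
    Tendsto (fun m => ∫ t, φ (min (f m t) R) ∂μ) atTop (𝓝 (∫ t, φ (min (h t) R) ∂μ)) := by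
  have hφR : ContinuousOn (fun r => φ (min r R)) (Ici 0) :=
    hφ.comp (continuous_id.min continuous_const).continuousOn fun r hr => le_min hr hR
  refine tendsto_integral_of_dominated_convergence (fun _ => R)
    (fun m => hφR.comp_aestronglyMeasurable_of_nonneg (hf_meas m) (hf₀ m))
    (integrable_const R) (fun m => ?_) ?_
  · filter_upwards [hf₀ m] with t ht
    exact (hφ_le _ (le_min ht hR)).trans (min_le_right _ _)
  · filter_upwards [h_ae, ae_all_iff.2 hf₀] with t ht ht₀
    have h₀ : 0 ≤ h t := ge_of_tendsto' ht ht₀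
    exact (hφR (h t) h₀).tendsto.comp
      (tendsto_nhdsWithin_of_tendsto_nhds_of_eventually_within _ ht (Eventually.of_forall ht₀))

theorem tendsto_integral_comp_of_isLittleO {φ : ℝ → ℝ} (hφ : ContinuousOn φ (Ici 0))
    (hφ_le : ∀ r, 0 ≤ r → |φ r| ≤ r) (hφ_o : φ =o[atTop] id) {M : ℝ}
    {f : ℕ → α → ℝ} {h : α → ℝ} (hf_int : ∀ m, Integrable (f m) μ) (hf₀ : ∀ m, 0 ≤ᵐ[μ] f m)
    (hf_bdd : ∀ m, ∫ t, f m t ∂μ ≤ M) (h_ae : ∀ᵐ t ∂μ, Tendsto (fun m => f m t) atTop (𝓝 (h t)))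
    (h_int : Integrable h μ) :
    Tendsto (fun m => ∫ t, φ (f m t) ∂μ) atTop (𝓝 (∫ t, φ (h t) ∂μ)) := by
  have h₀ : 0 ≤ᵐ[μ] h := by
    filter_upwards [h_ae, ae_all_iff.2 hf₀] with t ht ht₀
    exact ge_of_tendsto' ht ht₀
  refine tendsto_of_forall_approx fun ε hε => ?_
  set K := |M| + |∫ t, h t ∂μ| + 1
  set δ := ε / (2 * K)
  have hK : 0 < K := by positivity
  have hδ : 0 < δ := by positivity
  have hδK : ∀ x ≤ K, 2 * δ * x ≤ ε := fun x hx => by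
    calc 2 * δ * x ≤ 2 * δ * K := by gcongr
      _ = ε := by simp only [δ]; field_simp
  obtain ⟨R₀, hR₀⟩ := eventually_atTop.1 (hφ_o.def hδ)
  have hφ_small : ∀ s, max R₀ 0 ≤ s → |φ s| ≤ δ * s := fun s hs => by
    simpa [abs_of_nonneg ((le_max_right _ _).trans hs)] using hR₀ s ((le_max_left _ _).trans hs)
  refine ⟨_, _, tendsto_integral_comp_min hφ hφ_le (le_max_right R₀ 0) (fun m => (hf_int m).1)
    hf₀ h_ae, fun m => ?_, ?_⟩
  · refine (abs_integral_sub_comp_min_le hφ hφ_le hδ.le (le_max_right _ _) hφ_small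
      (hf_int m) (hf₀ m)).trans (hδK _ ?_)
    linarith [hf_bdd m, le_abs_self M, abs_nonneg (∫ t, h t ∂μ)]
  · rw [dist_comm]
    refine (abs_integral_sub_comp_min_le hφ hφ_le hδ.le (le_max_right _ _) hφ_small
      h_int h₀).trans (hδK _ ?_)
    linarith [le_abs_self (∫ t, h t ∂μ), abs_nonneg M]

end

theorem truncated_convergence_iterated_general
    (T M αhat : ℝ) (hαhat : 0 < αhat)
    (h : ℝ → ℝ) (hm : ℕ → ℝ → ℝ) (p : ℝ → ℝ → ℝ) (g : ℝ → ℝ)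
    (hm_nonneg : ∀ m, ∀ t ∈ Ioo (0:ℝ) T, 0 ≤ hm m t)
    (hm_int : ∀ m, IntegrableOn (hm m) (Ioo 0 T))
    (hm_bdd : ∀ m, ∫ t in Ioo 0 T, hm m t ≤ M)
    (h_ae : ∀ᵐ t ∂(volume.restrict (Ioo 0 T)),
      Tendsto (fun m => hm m t) atTop (nhds (h t)))
    (h_int : IntegrableOn h (Ioo 0 T))
    (hp_cont : ∀ α ∈ Ioo (0:ℝ) αhat, ContinuousOn (p α) (Ici 0))
    (hp_range : ∀ α ∈ Ioo (0:ℝ) αhat, ∀ r : ℝ, 0 ≤ r → p α r ∈ Icc (0:ℝ) 1)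
    (hp_one : ∀ α ∈ Ioo (0:ℝ) αhat, ∀ r ∈ Icc (0:ℝ) (g α), p α r = 1)
    (hp_lim : ∀ α ∈ Ioo (0:ℝ) αhat, Tendsto (p α) atTop (nhds 0))
    (hg_lim : Tendsto g (nhdsWithin αhat (Iio αhat)) atTop) :
    ∀ α ∈ Ioo (0:ℝ) αhat,
    ∃ L : ℝ → ℝ,
      (∀ α ∈ Ioo (0:ℝ) αhat,
        Tendsto (fun m => ∫ t in Ioo 0 T, hm m t * p α (hm m t)) atTop (nhds (L α))) ∧
      Tendsto L (nhdsWithin αhat (Iio αhat)) (nhds (∫ t in Ioo 0 T, h t)) := by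
  intro _ _
  have hm₀ : ∀ m, 0 ≤ᵐ[volume.restrict (Ioo 0 T)] hm m := fun m =>
    (ae_restrict_iff' measurableSet_Ioo).2 (Eventually.of_forall (hm_nonneg m))
  have h₀ : 0 ≤ᵐ[volume.restrict (Ioo 0 T)] h := by
    filter_upwards [h_ae, ae_all_iff.2 hm₀] with t ht ht₀
    exact ge_of_tendsto' ht ht₀
  have hφ_cont : ∀ α ∈ Ioo 0 αhat, ContinuousOn (fun r => r * p α r) (Ici 0) :=
    fun α hα => continuousOn_id.mul (hp_cont α hα)
  have hφ_le : ∀ α ∈ Ioo 0 αhat, ∀ r, 0 ≤ r → |r * p α r| ≤ r := fun α hα r hr => by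
    obtain ⟨hp₀, hp₁⟩ := hp_range α hα r hr
    rw [abs_of_nonneg (mul_nonneg hr hp₀)]
    exact mul_le_of_le_one_right hr hp₁
  have h_near : ∀ᶠ α in 𝓝[<] αhat, α ∈ Ioo 0 αhat := Ioo_mem_nhdsLT hαhat
  refine ⟨fun α => ∫ t in Ioo 0 T, h t * p α (h t), fun α hα => ?_, ?_⟩
  · have hφ_o : (fun r => r * p α r) =o[atTop] fun r => r := by
      simpa using (isBigO_refl id atTop).mul_isLittleO
        ((isLittleO_one_iff ℝ).2 (hp_lim α hα))
    exact tendsto_integral_comp_of_isLittleO (hφ_cont α hα) (hφ_le α hα) hφ_o hm_int hm₀ hm_bdd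
      h_ae h_int
  · refine tendsto_integral_comp_of_tendsto_self (h_near.mono hφ_cont) (h_near.mono hφ_le)
      (fun r hr => tendsto_const_nhds.congr' ?_) h_int h₀
    filter_upwards [h_near, hg_lim.eventually_ge_atTop r] with α hα hgα
    rw [hp_one α hα r ⟨hr, hgα⟩, mul_one]

theorem truncated_convergence_iterated
    (T M αhat : ℝ) (hT : 0 < T) (hαhat : 0 < αhat)
    (h : ℝ → ℝ) (hm : ℕ → ℝ → ℝ) (p : ℝ → ℝ → ℝ) (g : ℝ → ℝ)
    (hm_nonneg : ∀ m, ∀ t ∈ Ioo (0:ℝ) T, 0 ≤ hm m t)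
    (hm_int : ∀ m, IntegrableOn (hm m) (Ioo 0 T))
    (hm_bdd : ∀ m, ∫ t in Ioo 0 T, hm m t ≤ M)
    (h_ae : ∀ᵐ t ∂(volume.restrict (Ioo 0 T)),
      Tendsto (fun m => hm m t) atTop (nhds (h t)))
    (h_int : IntegrableOn h (Ioo 0 T))
    (hp_cont : ∀ α ∈ Ioo (0:ℝ) αhat, ContinuousOn (p α) (Ici 0))
    (hp_range : ∀ α ∈ Ioo (0:ℝ) αhat, ∀ r : ℝ, 0 ≤ r → p α r ∈ Icc (0:ℝ) 1)
    (hp_one : ∀ α ∈ Ioo (0:ℝ) αhat, ∀ r ∈ Icc (0:ℝ) (g α), p α r = 1)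
    (hp_anti : ∀ α ∈ Ioo (0:ℝ) αhat, AntitoneOn (p α) (Ioi (g α)))
    (hp_lim : ∀ α ∈ Ioo (0:ℝ) αhat, Tendsto (p α) atTop (nhds 0))
    (hg_mono : StrictMonoOn g (Ioo 0 αhat))
    (hg_cont : ContinuousOn g (Ioo 0 αhat))
    (hg_lim : Tendsto g (nhdsWithin αhat (Iio αhat)) atTop) :
    ∀ α ∈ Ioo (0:ℝ) αhat,
    ∃ L : ℝ → ℝ,
      (∀ α ∈ Ioo (0:ℝ) αhat,
        Tendsto (fun m => ∫ t in Ioo 0 T, hm m t * p α (hm m t)) atTop (nhds (L α))) ∧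
      Tendsto L (nhdsWithin αhat (Iio αhat)) (nhds (∫ t in Ioo 0 T, h t)) :=
  truncated_convergence_iterated_general T M αhat hαhat h hm p g hm_nonneg hm_int hm_bdd h_ae h_int
    hp_cont hp_range hp_one hp_lim hg_lim
end

section
/- Let $\{\rho_m\}$ be measurable nonnegative functions on $(s,t)$ converging almost everywhere to $\rho \in L^1(s,t)$. For $\alpha \in (0,1)$ set $J(\alpha,m) := \{\tau \in (s,t) : \rho_m(\tau) > \tan(\alpha\pi/2)\}$, and assume $|J(\alpha,m)| \le c/\tan(\alpha\pi/2)$ for all $m$, with $c$ independent of $\alpha$ and $m$. Then $\lim_{\alpha\to1^-} \frac{1}{1-\alpha} \limsup_m \int_{J(\alpha,m)} \frac{\rho_m^2}{1+\rho_m^2}\,d\tau = 0$. -/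
/-!
With `T = tan (απ/2)`, the integrand is at most `1`, so the integral over `J α m` is at most the
measure of `{ρₘ > T}`; by the reverse Fatou lemma for sets, its limsup in `m` is at most the
measure of `{ρ ≥ T}`. Integrability of `ρ` gives `T · |{ρ ≥ T}| ≤ ∫_{ρ ≥ T} ρ → 0` as `T → ∞`,
and `(1 - α) T → 2/π` as `α → 1⁻`, so `(1 - α)⁻¹ |{ρ ≥ T}| → 0`.
-/

open MeasureTheory Filter Real Set Topology

namespace MeasureTheory

variable {α : Type*} [MeasurableSpace α] {μ : Measure α} [IsFiniteMeasure μ]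

theorem limsup_measure_le_measure_limsup {s : ℕ → Set α}
    (hs : ∀ n, NullMeasurableSet (s n) μ) :
    limsup (fun n => μ (s n)) atTop ≤ μ (limsup s atTop) := by
  have hanti : Antitone fun n => ⋃ i ≥ n, s i :=
    fun m n hmn => biUnion_mono (fun i hi => hmn.trans hi) fun _ _ => le_rfl
  calc limsup (fun n => μ (s n)) atTop = ⨅ n, ⨆ i ≥ n, μ (s i) := limsup_eq_iInf_iSup_of_nat
    _ ≤ ⨅ n, μ (⋃ i ≥ n, s i) :=
      iInf_mono fun n => iSup₂_le fun i hi => measure_mono (subset_biUnion_of_mem hi)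
    _ = μ (⋂ n, ⋃ i ≥ n, s i) :=
      (hanti.measure_iInter (fun n => .iUnion fun i => .iUnion fun _ => hs i)
        ⟨0, measure_ne_top _ _⟩).symm
    _ = μ (limsup s atTop) := by rw [limsup_eq_iInf_iSup_of_nat]; rfl

theorem limsup_measure_setOf_lt_le {f : ℕ → α → ℝ} {g : α → ℝ}
    (hf : ∀ n, AEMeasurable (f n) μ)
    (hlim : ∀ᵐ x ∂μ, Tendsto (fun n => f n x) atTop (𝓝 (g x))) (u : ℝ) :
    limsup (fun n => μ {x | u < f n x}) atTop ≤ μ {x | u ≤ g x} := by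
  refine (limsup_measure_le_measure_limsup fun n =>
    nullMeasurableSet_lt aemeasurable_const (hf n)).trans (measure_mono_ae ?_)
  filter_upwards [hlim] with x hx (hmem : x ∈ limsup (fun n => {x | u < f n x}) atTop)
  rw [mem_limsup_iff_frequently_mem] at hmem
  exact isClosed_Ici.mem_of_frequently_of_tendsto (hmem.mono fun n h => le_of_lt h) hx

theorem limsup_measureReal_setOf_lt_le {f : ℕ → α → ℝ} {g : α → ℝ}
    (hf : ∀ n, AEMeasurable (f n) μ)
    (hlim : ∀ᵐ x ∂μ, Tendsto (fun n => f n x) atTop (𝓝 (g x))) (u : ℝ) :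
    limsup (fun n => μ.real {x | u < f n x}) atTop ≤ μ.real {x | u ≤ g x} := by
  simp only [measureReal_def]
  rw [ENNReal.limsup_toReal_eq (measure_ne_top μ univ)
    (.of_forall fun n => measure_mono (subset_univ _))]
  exact ENNReal.toReal_mono (measure_ne_top _ _) (limsup_measure_setOf_lt_le hf hlim u)

theorem limsup_setIntegral_setOf_lt_mem_Icc {f : ℕ → α → ℝ} {g : α → ℝ} {φ : ℕ → α → ℝ}
    (hf : ∀ n, AEMeasurable (f n) μ)
    (hlim : ∀ᵐ x ∂μ, Tendsto (fun n => f n x) atTop (𝓝 (g x)))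
    (hφ_nonneg : ∀ n x, 0 ≤ φ n x) (hφ_le_one : ∀ n x, φ n x ≤ 1) (u : ℝ) :
    limsup (fun n => ∫ x in {x | u < f n x}, φ n x ∂μ) atTop ∈ Icc 0 (μ.real {x | u ≤ g x}) := by
  have hint_nonneg : ∀ n, 0 ≤ ∫ x in {x | u < f n x}, φ n x ∂μ :=
    fun n => integral_nonneg (hφ_nonneg n)
  have hint_le : ∀ n, ∫ x in {x | u < f n x}, φ n x ∂μ ≤ μ.real {x | u < f n x} := fun n => by
    have := norm_setIntegral_le_of_norm_le_const (s := {x | u < f n x}) (measure_lt_top μ _)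
      fun x _ => (Real.norm_of_nonneg (hφ_nonneg n x)).trans_le (hφ_le_one n x)
    rwa [Real.norm_of_nonneg (hint_nonneg n), one_mul] at this
  have hbdd : IsBoundedUnder (· ≤ ·) atTop fun n => μ.real {x | u < f n x} :=
    isBoundedUnder_of ⟨μ.real univ, fun n => measureReal_mono (subset_univ _)⟩
  refine ⟨le_limsup_of_frequently_le (.of_forall hint_nonneg)
    (hbdd.mono_le (.of_forall hint_le)), ?_⟩
  exact (limsup_le_limsup (.of_forall hint_le) (isCoboundedUnder_le_of_le atTop hint_nonneg)
    hbdd).trans (limsup_measureReal_setOf_lt_le hf hlim u)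

theorem Integrable.tendsto_mul_measureReal_setOf_le {f : α → ℝ} (hf : Integrable f μ) :
    Tendsto (fun u => u * μ.real {x | u ≤ f x}) atTop (𝓝 0) := by
  obtain ⟨f', hf'_meas, hff'⟩ := hf.aestronglyMeasurable
  have hf'_int : Integrable f' μ := hf.congr hff'
  have hmeas : ∀ u, MeasurableSet {x | u ≤ f' x} :=
    fun u => measurableSet_le measurable_const hf'_meas.measurable
  suffices Tendsto (fun u => u * μ.real {x | u ≤ f' x}) atTop (𝓝 0) from
    this.congr fun u => congrArg (u * ·) (measureReal_congr (hff'.fun_comp (u ≤ ·))).symm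
  have htail : Tendsto (fun u => ∫ x in {x | u ≤ f' x}, f' x ∂μ) atTop (𝓝 0) := by
    simp_rw [← integral_indicator (hmeas _)]
    refine integral_zero α ℝ ▸ tendsto_integral_filter_of_dominated_convergence (‖f' ·‖)
      (.of_forall fun u => hf'_int.1.indicator (hmeas u))
      (.of_forall fun u => ae_of_all _ fun x => norm_indicator_le_norm_self _ _) hf'_int.norm
      (ae_of_all _ fun x => tendsto_const_nhds.congr' ?_)
    filter_upwards [eventually_gt_atTop (f' x)] with u hu
    exact (indicator_of_notMem (s := {x | u ≤ f' x}) (not_le.2 hu) f').symm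
  refine squeeze_zero' ?_ (.of_forall fun u => ?_) htail
  · filter_upwards [eventually_ge_atTop (0 : ℝ)] with u hu using mul_nonneg hu measureReal_nonneg
  · exact setIntegral_ge_of_const_le_real (hmeas u) (measure_ne_top _ _) (fun x hx => hx)
      hf'_int.integrableOn

end MeasureTheory

theorem tendsto_tan_mul_pi_div_two_atTop :
    Tendsto (fun α : ℝ => tan (α * π / 2)) (𝓝[<] 1) atTop :=
  tendsto_tan_pi_div_two.comp <| by
    simpa using ((continuous_mul_const π).div_const 2).continuousWithinAt.tendsto_nhdsWithin
      (x := 1) (s := Iio 1) fun α (hα : α < 1) => show α * π / 2 < π / 2 by nlinarith [pi_pos]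

theorem tendsto_one_sub_mul_tan_mul_pi_div_two :
    Tendsto (fun α : ℝ => (1 - α) * tan (α * π / 2)) (𝓝[<] 1) (𝓝 (2 / π)) := by
  have hcos : HasDerivAt (fun α : ℝ => cos (α * π / 2)) (-(π / 2)) 1 := by
    simpa using (((hasDerivAt_id (1 : ℝ)).mul_const π).div_const 2).cos
  have hslope : Tendsto (fun α : ℝ => cos (α * π / 2) / (1 - α)) (𝓝[<] 1) (𝓝 (π / 2)) := by
    have := (hasDerivAt_iff_tendsto_slope.mp hcos).neg.mono_left
      (nhdsWithin_mono _ fun α (hα : α < 1) => hα.ne)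
    refine (neg_neg (π / 2) ▸ this).congr fun α => ?_
    rw [slope_def_field, one_mul, cos_pi_div_two, sub_zero, ← neg_sub α 1, div_neg]
  have hsin : Tendsto (fun α : ℝ => sin (α * π / 2)) (𝓝[<] 1) (𝓝 1) := by
    simpa [Function.comp_def] using
      ((continuous_sin.comp ((continuous_mul_const π).div_const 2)).tendsto 1).mono_left
        nhdsWithin_le_nhds
  refine ((hsin.div hslope (by positivity)).congr fun α => ?_).trans (by rw [one_div_div])
  rw [Pi.div_apply, tan_eq_sin_div_cos, div_div_eq_mul_div, mul_div_assoc', mul_comm]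

theorem tendsto_one_sub_inv_mul_comp_tan {h : ℝ → ℝ}
    (hh : Tendsto (fun u => u * h u) atTop (𝓝 0)) :
    Tendsto (fun α : ℝ => (1 - α)⁻¹ * h (tan (α * π / 2))) (𝓝[<] 1) (𝓝 0) := by
  have := (tendsto_one_sub_mul_tan_mul_pi_div_two.inv₀ (by positivity)).mul
    (hh.comp tendsto_tan_mul_pi_div_two_atTop)
  rw [mul_zero] at this
  refine this.congr' ?_
  filter_upwards [self_mem_nhdsWithin, tendsto_tan_mul_pi_div_two_atTop.eventually_gt_atTop 0]
    with α (hα : α < 1) htan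
  have : 1 - α ≠ 0 := sub_ne_zero.2 hα.ne'
  simp only [Function.comp_apply]
  field_simp

theorem limsup_superlevel_vanishes_general
    (s t : ℝ)
    (ρm : ℕ → ℝ → ℝ) (ρ : ℝ → ℝ)
    (hmeas : ∀ m, Measurable (ρm m))
    (hae : ∀ᵐ τ ∂(volume.restrict (Ioo s t)),
      Tendsto (fun m => ρm m τ) atTop (nhds (ρ τ)))
    (hρ_int : IntegrableOn ρ (Ioo s t))
    (J : ℝ → ℕ → Set ℝ)
    (hJ : ∀ α m, J α m = {τ ∈ Ioo s t | Real.tan (α * π / 2) < ρm m τ}) :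
    Tendsto (fun α : ℝ => (1 - α)⁻¹ *
        Filter.limsup (fun m => ∫ τ in J α m, (ρm m τ) ^ 2 / (1 + (ρm m τ) ^ 2)) atTop)
      (nhdsWithin 1 (Iio 1)) (nhds 0) := by
  set μ := volume.restrict (Ioo s t)
  have : IsFiniteMeasure μ := isFiniteMeasure_restrict.2 measure_Ioo_lt_top.ne
  have hJ_restrict : ∀ α m,
      volume.restrict (J α m) = μ.restrict {τ | tan (α * π / 2) < ρm m τ} := fun α m => by
    rw [Measure.restrict_restrict (measurableSet_lt measurable_const (hmeas m)), hJ, inter_comm]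
    rfl
  have hlimsup : ∀ α, limsup (fun m => ∫ τ in J α m, ρm m τ ^ 2 / (1 + ρm m τ ^ 2)) atTop ∈
      Icc 0 (μ.real {τ | tan (α * π / 2) ≤ ρ τ}) := fun α => by
    simp only [hJ_restrict]
    exact limsup_setIntegral_setOf_lt_mem_Icc (fun m => (hmeas m).aemeasurable) hae
      (fun m τ => by positivity) (fun m τ => div_le_one_of_le₀ (by linarith) (by positivity)) _
  refine tendsto_of_tendsto_of_tendsto_of_le_of_le' tendsto_const_nhds
    (tendsto_one_sub_inv_mul_comp_tan hρ_int.tendsto_mul_measureReal_setOf_le) ?_ ?_ <;>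
    filter_upwards [self_mem_nhdsWithin] with α (hα : α < 1)
  · exact mul_nonneg (inv_nonneg.2 (sub_nonneg.2 hα.le)) (hlimsup α).1
  · exact mul_le_mul_of_nonneg_left (hlimsup α).2 (inv_nonneg.2 (sub_nonneg.2 hα.le))

theorem limsup_superlevel_vanishes
    (s t c : ℝ) (hst : s < t) (hc : 0 < c)
    (ρm : ℕ → ℝ → ℝ) (ρ : ℝ → ℝ)
    (hmeas : ∀ m, Measurable (ρm m))
    (hnonneg : ∀ m, ∀ τ ∈ Ioo s t, 0 ≤ ρm m τ)
    (hae : ∀ᵐ τ ∂(volume.restrict (Ioo s t)),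
      Tendsto (fun m => ρm m τ) atTop (nhds (ρ τ)))
    (hρ_int : IntegrableOn ρ (Ioo s t))
    (J : ℝ → ℕ → Set ℝ)
    (hJ : ∀ α m, J α m = {τ ∈ Ioo s t | Real.tan (α * π / 2) < ρm m τ})
    (hJ_meas : ∀ α ∈ Ioo (0:ℝ) 1, ∀ m,
      volume (J α m) ≤ ENNReal.ofReal (c / Real.tan (α * π / 2))) :
    Tendsto (fun α : ℝ => (1 - α)⁻¹ *
        Filter.limsup (fun m => ∫ τ in J α m, (ρm m τ) ^ 2 / (1 + (ρm m τ) ^ 2)) atTop)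
      (nhdsWithin 1 (Iio 1)) (nhds 0) :=
  limsup_superlevel_vanishes_general s t ρm ρ hmeas hae hρ_int J hJ
end
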